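/- arXiv:1212.0996 — 7 statements merged into one kernel-verified Lean document; each statement's English description precedes it below -/
import Mathlib

section
/- If (ν₁,…,ν_{d-1}) are non-negative integers satisfying ∑ i²νᵢ = d² - 1 and ∑ iνᵢ = 3(d-1), with d ≥ 3, then ∑ νᵢ ≤ 2d - 1. -/
theorem stmt_1 (d : ℕ) (hd : 3 ≤ d) (ν : ℕ → ℕ)
    (h1 : ∑ i ∈ Finset.Icc 1 (d - 1), i ^ 2 * ν i = d ^ 2 - 1)
    (h2 : ∑ i ∈ Finset.Icc 1 (d - 1), i * ν i = 3 * (d - 1)) :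
    ∑ i ∈ Finset.Icc 1 (d - 1), ν i ≤ 2 * d - 1 := by
  obtain ⟨k, rfl⟩ : ∃ k, d = k + 3 := ⟨d - 3, by omega⟩
  -- split i^2 * ν i = i*(i-1)*ν i + i*ν i
  have hE : ∑ i ∈ Finset.Icc 1 (k + 3 - 1), i * (i - 1) * ν i
      + ∑ i ∈ Finset.Icc 1 (k + 3 - 1), i * ν i
      = ∑ i ∈ Finset.Icc 1 (k + 3 - 1), i ^ 2 * ν i := by
    rw [← Finset.sum_add_distrib]
    refine Finset.sum_congr rfl fun i hi => ?_
    obtain ⟨j, rfl⟩ : ∃ j, i = j + 1 := ⟨i - 1, by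
      have := (Finset.mem_Icc.mp hi).1; omega⟩
    simp only [Nat.add_sub_cancel]
    ring
  have hD : ∑ i ∈ Finset.Icc 1 (k + 3 - 1), (i - 1) * ν i
      + ∑ i ∈ Finset.Icc 1 (k + 3 - 1), ν i
      = ∑ i ∈ Finset.Icc 1 (k + 3 - 1), i * ν i := by
    rw [← Finset.sum_add_distrib]
    refine Finset.sum_congr rfl fun i hi => ?_
    obtain ⟨j, rfl⟩ : ∃ j, i = j + 1 := ⟨i - 1, by
      have := (Finset.mem_Icc.mp hi).1; omega⟩
    simp only [Nat.add_sub_cancel]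
    ring
  have hle : ∑ i ∈ Finset.Icc 1 (k + 3 - 1), i * (i - 1) * ν i
      ≤ (k + 2) * ∑ i ∈ Finset.Icc 1 (k + 3 - 1), (i - 1) * ν i := by
    rw [Finset.mul_sum]
    refine Finset.sum_le_sum fun i hi => ?_
    have h2' := (Finset.mem_Icc.mp hi).2
    rw [← mul_assoc]
    have : i ≤ k + 2 := by omega
    exact Nat.mul_le_mul_right _ (Nat.mul_le_mul_right _ this)
  set a := ∑ i ∈ Finset.Icc 1 (k + 3 - 1), ν i
  set b := ∑ i ∈ Finset.Icc 1 (k + 3 - 1), (i - 1) * ν i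
  set e := ∑ i ∈ Finset.Icc 1 (k + 3 - 1), i * (i - 1) * ν i
  have he : e = k ^ 2 + 3 * k + 2 := by
    have hsq : (k + 3) ^ 2 = k ^ 2 + 6 * k + 9 := by ring
    omega
  have hba : b + a = 3 * (k + 2) := by omega
  -- from e ≤ (k+2)*b and e = (k+1)(k+2), get b ≥ k+1
  have hb : k + 1 ≤ b := by
    by_contra h
    push_neg at h
    have h1' : (k + 2) * b ≤ (k + 2) * k := Nat.mul_le_mul_left _ (by omega)
    nlinarith
  omega
end

section
/- If d ≥ 3 and non-negative integers ν₁,…,ν_{d-1} satisfy ∑ i²νᵢ = d² - 1, ∑ iνᵢ = 3(d-1), and ∑ νᵢ = 2d - 1, then ν_{d-1} + ν₁ = 2d - 1 and νᵢ = 0 for all 2 ≤ i ≤ d - 2. -/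
theorem stmt_2 (d : ℕ) (hd : 3 ≤ d) (ν : ℕ → ℕ)
    (h1 : ∑ i ∈ Finset.Icc 1 (d - 1), i ^ 2 * ν i = d ^ 2 - 1)
    (h2 : ∑ i ∈ Finset.Icc 1 (d - 1), i * ν i = 3 * (d - 1))
    (h3 : ∑ i ∈ Finset.Icc 1 (d - 1), ν i = 2 * d - 1) :
    ν (d - 1) + ν 1 = 2 * d - 1 ∧ ∀ i, 2 ≤ i → i ≤ d - 2 → ν i = 0 := by
  set S := Finset.Icc 1 (d - 1) with hS
  have e1 : ∑ i ∈ S, ((i : ℤ))^2 * (ν i : ℤ) = (d : ℤ)^2 - 1 := by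
    have := congrArg (Nat.cast : ℕ → ℤ) h1
    push_cast [Nat.cast_sub (show 1 ≤ d^2 by nlinarith)] at this
    exact this
  have e2 : ∑ i ∈ S, ((i : ℤ)) * (ν i : ℤ) = 3 * ((d : ℤ) - 1) := by
    have := congrArg (Nat.cast : ℕ → ℤ) h2
    push_cast [Nat.cast_sub (show 1 ≤ d by omega)] at this
    exact this
  have e3 : ∑ i ∈ S, (ν i : ℤ) = 2 * (d : ℤ) - 1 := by
    have := congrArg (Nat.cast : ℕ → ℤ) h3
    push_cast [Nat.cast_sub (show 1 ≤ 2 * d by omega)] at this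
    exact this
  have hz : ∑ i ∈ S, ((i : ℤ) - 1) * ((d : ℤ) - 1 - i) * (ν i : ℤ) = 0 := by
    have expand : ∑ i ∈ S, ((i : ℤ) - 1) * ((d : ℤ) - 1 - i) * (ν i : ℤ)
        = (d : ℤ) * ∑ i ∈ S, ((i : ℤ)) * (ν i : ℤ)
          - ∑ i ∈ S, ((i : ℤ))^2 * (ν i : ℤ)
          - ((d : ℤ) - 1) * ∑ i ∈ S, (ν i : ℤ) := by
      rw [Finset.mul_sum, Finset.mul_sum, ← Finset.sum_sub_distrib,
        ← Finset.sum_sub_distrib]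
      exact Finset.sum_congr rfl fun i _ => by ring
    rw [expand, e1, e2, e3]; ring
  have hnn : ∀ i ∈ S, 0 ≤ ((i : ℤ) - 1) * ((d : ℤ) - 1 - i) * (ν i : ℤ) := by
    intro i hi
    simp only [hS, Finset.mem_Icc] at hi
    have h1i : (1 : ℤ) ≤ i := by exact_mod_cast hi.1
    have h2i : (i : ℤ) ≤ (d : ℤ) - 1 := by
      have : (i : ℤ) ≤ ((d - 1 : ℕ) : ℤ) := by exact_mod_cast hi.2
      rwa [Nat.cast_sub (by omega)] at this
    exact mul_nonneg (mul_nonneg (by linarith) (by linarith)) (by positivity)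
  have hvanish : ∀ i, 2 ≤ i → i ≤ d - 2 → ν i = 0 := by
    intro i hi2 hid
    have hiS : i ∈ S := by simp only [hS, Finset.mem_Icc]; omega
    have := (Finset.sum_eq_zero_iff_of_nonneg hnn).mp hz i hiS
    have h1i : (0 : ℤ) < (i : ℤ) - 1 := by
      have : (2 : ℤ) ≤ i := by exact_mod_cast hi2
      linarith
    have h2i : (0 : ℤ) < (d : ℤ) - 1 - i := by
      have : (i : ℤ) ≤ ((d - 2 : ℕ) : ℤ) := by exact_mod_cast hid
      rw [Nat.cast_sub (by omega)] at this
      push_cast at this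
      linarith
    have : (ν i : ℤ) = 0 := by
      rcases mul_eq_zero.mp this with h | h
      · rcases mul_eq_zero.mp h with h | h <;> nlinarith
      · exact h
    exact_mod_cast this
  refine ⟨?_, hvanish⟩
  have hsub : ({1, d - 1} : Finset ℕ) ⊆ S := by
    intro i hi
    simp only [Finset.mem_insert, Finset.mem_singleton] at hi
    simp only [hS, Finset.mem_Icc]
    omega
  have hsum : ∑ i ∈ S, ν i = ∑ i ∈ ({1, d - 1} : Finset ℕ), ν i := by
    refine (Finset.sum_subset hsub ?_).symm
    intro i hiS hnot
    simp only [Finset.mem_insert, Finset.mem_singleton, not_or] at hnot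
    simp only [hS, Finset.mem_Icc] at hiS
    exact hvanish i (by omega) (by omega)
  rw [hsum, Finset.sum_pair (by omega : 1 ≠ d - 1)] at h3
  omega
end

section
/- If d ≥ 3 and non-negative integers ν₁,…,ν_{d-1} satisfy ∑ i²νᵢ = d² - 1, ∑ iνᵢ = 3(d-1), ∑ νᵢ = 2d - 1, and additionally at most one index i > d/2 has νᵢ ≥ 1 and that νᵢ equals at most 1 for such i (i.e., ∑_{i > d/2} νᵢ ≤ 1), then ν_{d-1} = 1 and ν₁ = 2d - 2 and νᵢ = 0 for 2 ≤ i ≤ d - 2. -/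
theorem stmt_3 (d : ℕ) (hd : 3 ≤ d) (ν : ℕ → ℕ)
    (h1 : ∑ i ∈ Finset.Icc 1 (d - 1), i ^ 2 * ν i = d ^ 2 - 1)
    (h2 : ∑ i ∈ Finset.Icc 1 (d - 1), i * ν i = 3 * (d - 1))
    (h3 : ∑ i ∈ Finset.Icc 1 (d - 1), ν i = 2 * d - 1)
    (hirr : ∑ i ∈ (Finset.Icc 1 (d - 1)).filter (fun i => d < 2 * i), ν i ≤ 1) :
    ν (d - 1) = 1 ∧ ν 1 = 2 * d - 2 ∧ ∀ i, 2 ≤ i → i ≤ d - 2 → ν i = 0 := by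
  -- key pointwise identity
  have key : ∀ i ∈ Finset.Icc 1 (d - 1),
      (i - 1) * (d - 1 - i) * ν i + (i ^ 2 * ν i + (d - 1) * ν i) = d * (i * ν i) := by
    intro i hi
    simp only [Finset.mem_Icc] at hi
    obtain ⟨j, rfl⟩ : ∃ j, i = j + 1 := ⟨i - 1, by omega⟩
    obtain ⟨k, rfl⟩ : ∃ k, d = j + k + 2 := ⟨d - j - 2, by omega⟩
    have e1 : j + 1 - 1 = j := by omega
    have e2 : j + k + 2 - 1 - (j + 1) = k := by omega
    have e3 : j + k + 2 - 1 = j + k + 1 := by omega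
    rw [e1, e2, e3]
    ring
  have hsum := Finset.sum_congr rfl key
  rw [Finset.sum_add_distrib, Finset.sum_add_distrib, h1, ← Finset.mul_sum, ← Finset.mul_sum,
    h3, h2] at hsum
  have hX : d ^ 2 - 1 + (d - 1) * (2 * d - 1) = d * (3 * (d - 1)) := by
    obtain ⟨m, rfl⟩ : ∃ m, d = m + 1 := ⟨d - 1, by omega⟩
    have : (m + 1) ^ 2 = m ^ 2 + 2 * m + 1 := by ring
    rw [this]
    have : m ^ 2 + 2 * m + 1 - 1 = m ^ 2 + 2 * m := by omega
    rw [this]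
    have e1 : m + 1 - 1 = m := by omega
    have e2 : 2 * (m + 1) - 1 = 2 * m + 1 := by omega
    rw [e1, e2]
    ring
  rw [← hX] at hsum
  have hsum0 : ∑ i ∈ Finset.Icc 1 (d - 1), (i - 1) * (d - 1 - i) * ν i = 0 :=
    Nat.add_right_cancel (hsum.trans (zero_add _).symm)
  have hmid : ∀ i, 2 ≤ i → i ≤ d - 2 → ν i = 0 := by
    intro i h2i hid
    have hi : i ∈ Finset.Icc 1 (d - 1) := by simp only [Finset.mem_Icc]; omega
    have := (Finset.sum_eq_zero_iff.mp hsum0) i hi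
    rcases Nat.mul_eq_zero.mp this with h | h
    · rcases Nat.mul_eq_zero.mp h with h | h <;> omega
    · exact h
  -- collapse sums to the endpoints
  have hpair : ∀ f : ℕ → ℕ, (∀ i, 2 ≤ i → i ≤ d - 2 → f i = 0) →
      ∑ i ∈ Finset.Icc 1 (d - 1), f i = f 1 + f (d - 1) := by
    intro f hf
    rw [← Finset.sum_pair (show (1 : ℕ) ≠ d - 1 by omega)]
    refine (Finset.sum_subset ?_ ?_).symm
    · intro x hx
      simp only [Finset.mem_insert, Finset.mem_singleton] at hx
      simp only [Finset.mem_Icc]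
      omega
    · intro x hx hx'
      simp only [Finset.mem_Icc] at hx
      simp only [Finset.mem_insert, Finset.mem_singleton] at hx'
      exact hf x (by omega) (by omega)
  have e3 : ν 1 + ν (d - 1) = 2 * d - 1 := by
    rw [← hpair ν hmid]; exact h3
  have e2 : 1 * ν 1 + (d - 1) * ν (d - 1) = 3 * (d - 1) := by
    rw [← hpair (fun i => i * ν i) (fun i h2i hid => by show i * ν i = 0; rw [hmid i h2i hid, mul_zero])]
    exact h2
  rw [one_mul] at e2
  have hsplit : (d - 1) * ν (d - 1) = (d - 2) * ν (d - 1) + ν (d - 1) := by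
    have : d - 1 = (d - 2) + 1 := by omega
    rw [this, add_mul, one_mul]
  rw [hsplit] at e2
  set c := (d - 2) * ν (d - 1) with hc
  have hcval : c = d - 2 := by omega
  have hb : ν (d - 1) = 1 := by
    have : (d - 2) * ν (d - 1) = (d - 2) * 1 := by rw [mul_one, ← hc, hcval]
    exact Nat.eq_of_mul_eq_mul_left (by omega) this
  exact ⟨hb, by omega, hmid⟩
end

section
/- If d ≥ 2 and m₁ ≥ m₂ ≥ … ≥ m_r ≥ 1 are integers with ∑ mᵢ² = d² - 1 and ∑ mᵢ = 3(d - 1), then r ≥ 3 and m₁ + m₂ + m₃ ≥ d + 1. -/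
set_option maxHeartbeats 1000000


theorem stmt_6 (d r : ℕ) (hd : 2 ≤ d) (m : ℕ → ℕ)
    (hmono : ∀ i j, 1 ≤ i → i ≤ j → j ≤ r → m j ≤ m i)
    (hpos : ∀ i, 1 ≤ i → i ≤ r → 1 ≤ m i)
    (hzero : ∀ i, r < i → m i = 0)
    (h1 : ∑ i ∈ Finset.Icc 1 r, (m i) ^ 2 = d ^ 2 - 1)
    (h2 : ∑ i ∈ Finset.Icc 1 r, m i = 3 * (d - 1)) :
    3 ≤ r ∧ d + 1 ≤ m 1 + m 2 + m 3 := by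
  obtain ⟨e, rfl⟩ : ∃ e, d = e + 2 := ⟨d - 2, by omega⟩
  have hsq : (e + 2) ^ 2 - 1 = e ^ 2 + 4 * e + 3 := by
    have : (e + 2) ^ 2 = e ^ 2 + 4 * e + 4 := by ring
    omega
  have hd1 : 3 * (e + 2 - 1) = 3 * e + 3 := by omega
  rw [hsq] at h1
  rw [hd1] at h2
  -- r ≥ 3
  have hr : 3 ≤ r := by
    by_contra hr
    interval_cases r
    · simp at h2
    · simp at h1 h2
      nlinarith [h1, h2]
    · rw [show Finset.Icc 1 2 = {1, 2} from rfl] at h1 h2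
      rw [Finset.sum_insert (by decide), Finset.sum_singleton] at h1 h2
      nlinarith [sq_nonneg ((m 1 : ℤ) - m 2), h1, h2]
  refine ⟨hr, ?_⟩
  -- split sums at 3
  have hsplit1 : (∑ i ∈ Finset.Icc 1 3, (m i) ^ 2) + ∑ i ∈ Finset.Ioc 3 r, (m i) ^ 2
      = e ^ 2 + 4 * e + 3 := by
    rw [show Finset.Icc 1 3 = Finset.Ioc 0 3 from rfl,
      Finset.sum_Ioc_consecutive _ (by omega) hr,
      show Finset.Ioc 0 r = Finset.Icc 1 r from rfl, h1]
  have hsplit2 : (∑ i ∈ Finset.Icc 1 3, m i) + ∑ i ∈ Finset.Ioc 3 r, m i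
      = 3 * e + 3 := by
    rw [show Finset.Icc 1 3 = Finset.Ioc 0 3 from rfl,
      Finset.sum_Ioc_consecutive _ (by omega) hr,
      show Finset.Ioc 0 r = Finset.Icc 1 r from rfl, h2]
  rw [show Finset.Icc 1 3 = {1, 2, 3} from rfl] at hsplit1 hsplit2
  rw [Finset.sum_insert (by decide), Finset.sum_insert (by decide),
    Finset.sum_singleton] at hsplit1 hsplit2
  -- tail estimate
  have htail : ∑ i ∈ Finset.Ioc 3 r, (m i) ^ 2 ≤ m 3 * ∑ i ∈ Finset.Ioc 3 r, m i := by
    rw [Finset.mul_sum]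
    refine Finset.sum_le_sum fun i hi => ?_
    have hi' := Finset.mem_Ioc.mp hi
    have : m i ≤ m 3 := hmono 3 i (by omega) (by omega) hi'.2
    nlinarith [this]
  -- m 1 ≤ e + 1
  have hm1 : m 1 ≤ e + 1 := by
    have h1mem : (1 : ℕ) ∈ Finset.Icc 1 r := Finset.mem_Icc.mpr ⟨le_refl 1, by omega⟩
    have := Finset.single_le_sum (f := fun i => m i ^ 2) (fun i _ => Nat.zero_le _) h1mem
    rw [h1] at this
    nlinarith [this]
  have hm21 : m 2 ≤ m 1 := hmono 1 2 (by omega) (by omega) (by omega)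
  have hm32 : m 3 ≤ m 2 := hmono 2 3 (by omega) (by omega) (by omega)
  set P := ∑ i ∈ Finset.Ioc 3 r, m i
  set Q := ∑ i ∈ Finset.Ioc 3 r, (m i) ^ 2
  clear_value P Q
  have key : (e : ℤ) + 3 ≤ m 1 + m 2 + m 3 := by
    have c1 : ((m 1 : ℤ) ^ 2 + (m 2 ^ 2 + m 3 ^ 2)) + Q = e ^ 2 + 4 * e + 3 := by
      exact_mod_cast hsplit1
    have c2 : ((m 1 : ℤ) + (m 2 + m 3)) + P = 3 * e + 3 := by exact_mod_cast hsplit2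
    have c3 : (Q : ℤ) ≤ m 3 * P := by exact_mod_cast htail
    have c4 : (m 1 : ℤ) ≤ e + 1 := by exact_mod_cast hm1
    have c5 : (m 2 : ℤ) ≤ m 1 := by exact_mod_cast hm21
    have c6 : (m 3 : ℤ) ≤ m 2 := by exact_mod_cast hm32
    obtain ⟨q, hq⟩ : ∃ q : ℤ, (Q : ℤ) = q := ⟨_, rfl⟩
    obtain ⟨p, hp⟩ : ∃ p : ℤ, (P : ℤ) = p := ⟨_, rfl⟩
    obtain ⟨a, ha⟩ : ∃ a : ℤ, (m 1 : ℤ) = a := ⟨_, rfl⟩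
    obtain ⟨b, hb⟩ : ∃ b : ℤ, (m 2 : ℤ) = b := ⟨_, rfl⟩
    obtain ⟨c, hc⟩ : ∃ c : ℤ, (m 3 : ℤ) = c := ⟨_, rfl⟩
    simp only [hq, hp, ha, hb, hc] at c1 c2 c3 c4 c5 c6 ⊢
    clear hq hp ha hb hc hsplit1 hsplit2 htail hm1 hm21 hm32 h1 h2 hmono hpos hzero
    nlinarith [mul_nonneg (sub_nonneg.mpr c4) (sub_nonneg.mpr (c6.trans c5)),
      mul_nonneg (sub_nonneg.mpr (c5.trans c4)) (sub_nonneg.mpr c6),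
      c1, c2, c3]
  omega
end

section
/- If d ≥ 3 and m₁ ≥ m₂ ≥ … ≥ m_r ≥ 1 are integers with ∑ mᵢ² = d² - 1, ∑ mᵢ = 3(d - 1), and m₁ + m₂ ≤ d, then setting d' = 2d - m₁ - m₂ - m₃ one has 2 ≤ d' < d. -/
theorem stmt_7 (d r : ℕ) (hd : 3 ≤ d) (m : ℕ → ℕ)
    (hmono : ∀ i j, 1 ≤ i → i ≤ j → j ≤ r → m j ≤ m i)
    (hpos : ∀ i, 1 ≤ i → i ≤ r → 1 ≤ m i)
    (hzero : ∀ i, r < i → m i = 0)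
    (hub : ∀ i, 1 ≤ i → i ≤ r → m i ≤ d - 1)
    (h1 : ∑ i ∈ Finset.Icc 1 r, (m i) ^ 2 = d ^ 2 - 1)
    (h2 : ∑ i ∈ Finset.Icc 1 r, m i = 3 * (d - 1))
    (h12 : m 1 + m 2 ≤ d) :
    2 + (m 1 + m 2 + m 3) ≤ 2 * d ∧ d < m 1 + m 2 + m 3 := by
  -- First, r ≥ 3
  have hr3 : 3 ≤ r := by
    by_contra h
    push_neg at h
    have hle : ∑ i ∈ Finset.Icc 1 r, m i ≤ m 1 + m 2 := by
      interval_cases r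
      · simp
      · simp
      · rw [show Finset.Icc 1 2 = {1, 2} from rfl]
        rw [Finset.sum_insert (by decide), Finset.sum_singleton]
    omega
  have h21 : m 2 ≤ m 1 := hmono 1 2 (by omega) (by omega) (by omega)
  have h32 : m 3 ≤ m 2 := hmono 2 3 (by omega) (by omega) (by omega)
  have h1d : m 1 ≤ d - 1 := hub 1 (by omega) (by omega)
  have h2d : m 2 ≤ d - 1 := hub 2 (by omega) (by omega)
  have h3pos : 1 ≤ m 3 := hpos 3 (by omega) (by omega)
  -- splitting lemma
  have split : ∀ f : ℕ → ℕ,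
      ∑ i ∈ Finset.Icc 1 r, f i = f 1 + f 2 + ∑ i ∈ Finset.Icc 3 r, f i := by
    intro f
    rw [← Finset.Ico_add_one_right_eq_Icc 1 r, ← Finset.Ico_add_one_right_eq_Icc 3 r,
      ← Finset.sum_Ico_consecutive f (show 1 ≤ 3 by omega) (show 3 ≤ r + 1 by omega)]
    have : Finset.Ico 1 3 = ({1, 2} : Finset ℕ) := rfl
    rw [this]
    simp
  -- key inequality
  have key : d ^ 2 - 1 + m 3 * (m 1 + m 2)
      ≤ m 1 ^ 2 + m 2 ^ 2 + m 3 * (3 * (d - 1)) := by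
    rw [← h1, ← h2, split (fun i => m i ^ 2), split m]
    have hb : ∑ i ∈ Finset.Icc 3 r, (m i) ^ 2 ≤ m 3 * ∑ i ∈ Finset.Icc 3 r, m i := by
      rw [Finset.mul_sum]
      apply Finset.sum_le_sum
      intro i hi
      simp only [Finset.mem_Icc] at hi
      have h := hmono 3 i (by omega) hi.1 hi.2
      calc m i ^ 2 = m i * m i := sq (m i)
        _ ≤ m 3 * m i := Nat.mul_le_mul_right _ h
    have hma := Nat.mul_add (m 3) (m 1 + m 2) (∑ i ∈ Finset.Icc 3 r, m i)
    linarith [hb, hma]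
  refine ⟨by omega, ?_⟩
  -- lower bound: d < m 1 + m 2 + m 3
  have h1' : m 1 ≤ d - 1 := h1d
  zify [show 1 ≤ d from by omega, show 1 ≤ d ^ 2 from by nlinarith] at key h1d h2d ⊢
  have e1 : ((d : ℤ) - 1 - m 1) * ((m 1 : ℤ) - m 3) ≥ 0 := by
    have : (m 3 : ℤ) ≤ m 1 := by exact_mod_cast le_trans h32 h21
    nlinarith
  have e2 : ((d : ℤ) - 1 - m 2) * ((m 2 : ℤ) - m 3) ≥ 0 := by
    have : (m 3 : ℤ) ≤ m 2 := by exact_mod_cast h32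
    nlinarith
  have hd' : (3 : ℤ) ≤ d := by exact_mod_cast hd
  clear h1 h2 split hmono hpos hzero hub
  have hkey2 : ((d : ℤ)) ^ 2 - 1 ≤ ((d : ℤ) - 1) * ((m 1 : ℤ) + m 2 + m 3) := by
    linarith [e1, e2, key]
  by_contra hcon
  push_neg at hcon
  have hmul : ((d : ℤ) - 1) * ((m 1 : ℤ) + m 2 + m 3) ≤ ((d : ℤ) - 1) * d :=
    mul_le_mul_of_nonneg_left hcon (by linarith)
  nlinarith [hkey2, hmul, hd']
end

section
/- There do not exist two distinct multi-indexes (ν₁,…,ν_{d-1}) and (μ₁,…,μ_{d-1}), both satisfying Noether's equations ∑ i²νᵢ = d² - 1 = ∑ i²μᵢ and ∑ iνᵢ = 3(d-1) = ∑ iμᵢ, such that the multiset of multiplicities of ν arises from that of μ by merging groups of points while preserving total fat-point length, i.e., such that there is a partition of the multiplicities {m_i} of ν into groups, each group {m_{i,j}}_j merging into a single multiplicity m'_i of μ with m'_i(m'_i+1)/2 = ∑_j m_{i,j}(m_{i,j}+1)/2, with at least one group of size ≥ 2. -/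
/-!
By the linear Noether equation both multi-indices have total multiplicity `3(d-1)`. Merging points
while preserving fat-point length strictly lowers the total multiplicity: if
`m(m+1) = ∑ mⱼ(mⱼ+1)` then, as `∑ mⱼ(mⱼ+1) ≤ (∑ mⱼ)(∑ mⱼ + 1)` with strict inequality as soon
as two of the `mⱼ` are positive, `m ≤ ∑ mⱼ`, strictly for a group of at least two points.
-/

open Finset Function

theorem sum_eq_sum_Icc_mul_card {ι : Type*} [Fintype ι] (a : ι → ℕ) (ν : ℕ → ℕ) (d : ℕ)
    (hν : ∀ k, d ≤ k → ν k = 0) (hcard : ∀ k, 1 ≤ k → #{j | a j = k} = ν k) :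
    ∑ j, a j = ∑ k ∈ Icc 1 (d - 1), k * ν k := by
  -- `ν` does not see the indices with `a j = 0`; they form the extra fibre over `0`.
  have hmaps : ∀ j ∈ (univ : Finset ι), a j ∈ insert 0 (Icc 1 (d - 1)) := by
    intro j _
    rcases Nat.eq_zero_or_pos (a j) with h | h
    · simp [h]
    · have hlt : a j < d := by
        by_contra! hle
        have hpos : 0 < #{j' | a j' = a j} := card_pos.mpr ⟨j, by simp⟩
        rw [hcard _ h, hν _ hle] at hpos
        exact hpos.false
      simp only [mem_insert, mem_Icc]
      omega
  rw [← sum_fiberwise_of_maps_to hmaps, sum_insert (by simp),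
    sum_eq_zero fun j hj => (mem_filter.1 hj).2, zero_add]
  refine sum_congr rfl fun k hk => ?_
  rw [sum_const_nat fun j hj => (mem_filter.1 hj).2, hcard k (mem_Icc.1 hk).1, mul_comm]

section MulSucc

variable {ι : Type*} (s : Finset ι) (f : ι → ℕ)

theorem sum_mul_succ_le_sum_mul_sum_succ :
    ∑ j ∈ s, f j * (f j + 1) ≤ (∑ j ∈ s, f j) * (∑ j ∈ s, f j + 1) := by
  rw [sum_mul]
  exact sum_le_sum fun j hj =>
    Nat.mul_le_mul_left _ (Nat.succ_le_succ (single_le_sum (fun i _ => Nat.zero_le (f i)) hj))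

theorem sum_mul_succ_lt_sum_mul_sum_succ {j₁ j₂ : ι} (h₁ : j₁ ∈ s) (h₂ : j₂ ∈ s) (hne : j₁ ≠ j₂)
    (hf₁ : 0 < f j₁) (hf₂ : 0 < f j₂) :
    ∑ j ∈ s, f j * (f j + 1) < (∑ j ∈ s, f j) * (∑ j ∈ s, f j + 1) := by
  rw [sum_mul]
  refine sum_lt_sum (fun j hj => Nat.mul_le_mul_left _ ?_) ⟨j₁, h₁, ?_⟩
  · exact Nat.succ_le_succ (single_le_sum (fun i _ => Nat.zero_le (f i)) hj)
  · have := add_le_sum (fun i _ => Nat.zero_le (f i)) h₁ h₂ hne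
    exact Nat.mul_lt_mul_of_pos_left (by omega) hf₁

end MulSucc

theorem strictMono_mul_succ : StrictMono fun n : ℕ => n * (n + 1) :=
  fun _ _ h => Nat.mul_lt_mul'' h (Nat.succ_lt_succ h)

theorem sum_lt_sum_of_merge {ι κ : Type*} [Fintype ι] [Fintype κ] [DecidableEq κ]
    (a : ι → ℕ) (b : κ → ℕ) (g : ι → κ) (ha : ∀ j, 0 < a j)
    (hmerge : ∀ i, b i * (b i + 1) = ∑ j with g j = i, a j * (a j + 1))
    (hg : ¬ Injective g) :
    ∑ i, b i < ∑ j, a j := by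
  have hle : ∀ i, b i ≤ ∑ j with g j = i, a j := fun i =>
    strictMono_mul_succ.le_iff_le.1 ((hmerge i).trans_le (sum_mul_succ_le_sum_mul_sum_succ _ _))
  obtain ⟨j₁, j₂, hg₁₂, hne⟩ := not_injective_iff.1 hg
  have hlt : b (g j₁) < ∑ j with g j = g j₁, a j :=
    strictMono_mul_succ.lt_iff_lt.1 ((hmerge _).trans_lt
      (sum_mul_succ_lt_sum_mul_sum_succ _ _ (by simp) (by simp [hg₁₂]) hne (ha j₁) (ha j₂)))
  calc ∑ i, b i < ∑ i, ∑ j with g j = i, a j :=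
        sum_lt_sum (fun i _ => hle i) ⟨g j₁, mem_univ _, hlt⟩
    _ = ∑ j, a j := sum_fiberwise _ _ _

theorem mul_succ_eq_sum_of_div_two_eq {ι : Type*} (s : Finset ι) (a : ι → ℕ) (b : ℕ)
    (h : b * (b + 1) / 2 = ∑ j ∈ s, a j * (a j + 1) / 2) :
    b * (b + 1) = ∑ j ∈ s, a j * (a j + 1) := by
  have := congrArg (2 * ·) h
  simpa only [mul_sum, Nat.two_mul_div_two_of_even (Nat.even_mul_succ_self _)] using this

theorem stmt_13_general (d : ℕ) (ν μ : ℕ → ℕ)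
    (hν0 : ∀ k, k = 0 ∨ d ≤ k → ν k = 0) (hμ0 : ∀ k, k = 0 ∨ d ≤ k → μ k = 0)
    (hν2 : ∑ i ∈ Finset.Icc 1 (d - 1), i * ν i = 3 * (d - 1))
    (hμ2 : ∑ i ∈ Finset.Icc 1 (d - 1), i * μ i = 3 * (d - 1))
    -- the multiplicities of ν are the (a j), those of μ are the (b j)
    (r r' : ℕ) (a : Fin r → ℕ) (b : Fin r' → ℕ)
    (ha1 : ∀ j, 1 ≤ a j)
    (haν : ∀ k, 1 ≤ k → (Finset.univ.filter fun j => a j = k).card = ν k)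
    (hbμ : ∀ k, 1 ≤ k → (Finset.univ.filter fun j => b j = k).card = μ k)
    -- g groups the points of ν, each group merging to a single point of μ,
    -- preserving the fat-point length
    (g : Fin r → Fin r')
    (hmerge : ∀ i, b i * (b i + 1) / 2 =
        ∑ j ∈ Finset.univ.filter (fun j => g j = i), a j * (a j + 1) / 2)
    -- at least one group has size ≥ 2
    (hgroup : ¬ Function.Injective g) :
    False := by
  have htotal : ∑ j, a j = ∑ i, b i := by
    rw [sum_eq_sum_Icc_mul_card a ν d (fun k hk => hν0 k (.inr hk)) haν,
      sum_eq_sum_Icc_mul_card b μ d (fun k hk => hμ0 k (.inr hk)) hbμ, hν2, hμ2]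
  have hlt := sum_lt_sum_of_merge a b g ha1
    (fun i => mul_succ_eq_sum_of_div_two_eq _ _ _ (hmerge i)) hgroup
  exact hlt.ne' htotal

theorem stmt_13 (d : ℕ) (hd : 2 ≤ d) (ν μ : ℕ → ℕ)
    (hν0 : ∀ k, k = 0 ∨ d ≤ k → ν k = 0) (hμ0 : ∀ k, k = 0 ∨ d ≤ k → μ k = 0)
    (hν1 : ∑ i ∈ Finset.Icc 1 (d - 1), i ^ 2 * ν i = d ^ 2 - 1)
    (hν2 : ∑ i ∈ Finset.Icc 1 (d - 1), i * ν i = 3 * (d - 1))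
    (hμ1 : ∑ i ∈ Finset.Icc 1 (d - 1), i ^ 2 * μ i = d ^ 2 - 1)
    (hμ2 : ∑ i ∈ Finset.Icc 1 (d - 1), i * μ i = 3 * (d - 1))
    (hne : ν ≠ μ)
    -- the multiplicities of ν are the (a j), those of μ are the (b j)
    (r r' : ℕ) (a : Fin r → ℕ) (b : Fin r' → ℕ)
    (ha1 : ∀ j, 1 ≤ a j) (hb1 : ∀ j, 1 ≤ b j)
    (haν : ∀ k, 1 ≤ k → (Finset.univ.filter fun j => a j = k).card = ν k)
    (hbμ : ∀ k, 1 ≤ k → (Finset.univ.filter fun j => b j = k).card = μ k)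
    -- g groups the points of ν, each group merging to a single point of μ,
    -- preserving the fat-point length
    (g : Fin r → Fin r')
    (hmerge : ∀ i, b i * (b i + 1) / 2 =
        ∑ j ∈ Finset.univ.filter (fun j => g j = i), a j * (a j + 1) / 2)
    -- at least one group has size ≥ 2
    (hgroup : ¬ Function.Injective g) :
    False :=
  stmt_13_general d ν μ hν0 hμ0 hν2 hμ2 r r' a b ha1 haν hbμ g hmerge hgroup
end

section
/- For d ≥ 4, if (ν₁,…,ν_{d-1}) satisfies Noether's equations ∑ i²νᵢ = d² - 1 and ∑ iνᵢ = 3(d-1), is irreducible (in the sense that after the Hudson reduction step decreasing the three maximal multiplicities the inequality m₁ + m₂ ≤ d always holds, iterating until degree 2), and is not the de Jonquières type (2d-2, 0, …, 0, 1), then ∑ νᵢ ≤ d + 2. -/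
/-- The multiset of multiplicities associated to a multi-index `ν` in degree `d`:
the multiplicity `i` appears `ν i` times, for `1 ≤ i ≤ d - 1`. -/
def multisetOf (d : ℕ) (ν : ℕ → ℕ) : Multiset ℕ :=
  (Finset.Icc 1 (d - 1)).val.bind fun i => Multiset.replicate (ν i) i

/-- The three largest elements of a multiset of natural numbers. -/
def topThree (M : Multiset ℕ) : ℕ × ℕ × ℕ :=
  let l := (M.sort (· ≤ ·)).reverse
  (l.headI, l.tail.headI, l.tail.tail.headI)

/-- Hudson's reduction step: remove the three maximal multiplicities `m₁ ≥ m₂ ≥ m₃`,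
insert `d - m₂ - m₃`, `d - m₁ - m₃`, `d - m₁ - m₂` when positive, and replace the
degree `d` by `2d - m₁ - m₂ - m₃`. -/
def hudsonStep (d : ℕ) (M : Multiset ℕ) : ℕ × Multiset ℕ :=
  match topThree M with
  | (m1, m2, m3) =>
    (2 * d - (m1 + m2 + m3),
      Multiset.filter (fun x => 0 < x)
        ((d - m2 - m3) ::ₘ (d - m1 - m3) ::ₘ (d - m1 - m2) ::ₘ
          ((M.erase m1).erase m2).erase m3))

/-- Hudson's irreducibility test (with fuel): at every stage of iterated reduction,
until the degree drops to `2`, the two maximal multiplicities satisfy `m₁ + m₂ ≤ d`. -/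
def hudsonIrredAux : ℕ → ℕ → Multiset ℕ → Prop
  | 0, _, _ => True
  | fuel + 1, d, M =>
    if d ≤ 2 then True
    else
      match topThree M with
      | (m1, m2, _) =>
        m1 + m2 ≤ d ∧ hudsonIrredAux fuel (hudsonStep d M).1 (hudsonStep d M).2

/-- A multi-index `ν` in degree `d` is irreducible in Hudson's sense. -/
def HudsonIrreducible (d : ℕ) (ν : ℕ → ℕ) : Prop :=
  hudsonIrredAux d d (multisetOf d ν)

/-!
Let `a ≥ b` be the two largest multiplicities; irreducibility gives `a + b ≤ d`.
If `a = d - 1`, then `b = 1`, all multiplicities are `1` or `d - 1`, and the first Noether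
equation forces the de Jonquières type. Otherwise each of the remaining `n` multiplicities `x`
lies in `[1, b]`, so `x² ≤ (b + 1) x - b`; summing and inserting both Noether equations yields
a quadratic inequality in `a, b, d` that fails unless `n ≤ d`.
-/

lemma sum_multisetOf (d : ℕ) (ν : ℕ → ℕ) :
    (multisetOf d ν).sum = ∑ i ∈ Finset.Icc 1 (d - 1), i * ν i := by
  simp [multisetOf, Multiset.sum_bind, mul_comm]

lemma sum_map_sq_multisetOf (d : ℕ) (ν : ℕ → ℕ) :
    ((multisetOf d ν).map (· ^ 2)).sum = ∑ i ∈ Finset.Icc 1 (d - 1), i ^ 2 * ν i := by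
  simp [multisetOf, Multiset.map_bind, Multiset.sum_bind, mul_comm]

lemma card_multisetOf (d : ℕ) (ν : ℕ → ℕ) :
    Multiset.card (multisetOf d ν) = ∑ i ∈ Finset.Icc 1 (d - 1), ν i := by
  simp [multisetOf, Multiset.card_bind]

lemma mem_multisetOf {d : ℕ} {ν : ℕ → ℕ} {x : ℕ} (hx : x ∈ multisetOf d ν) :
    1 ≤ x ∧ x ≤ d - 1 := by
  simp only [multisetOf, Multiset.mem_bind, Multiset.mem_replicate] at hx
  obtain ⟨i, hi, -, rfl⟩ := hx
  exact Finset.mem_Icc.1 hi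

lemma count_multisetOf {d i : ℕ} (ν : ℕ → ℕ) (hi₁ : 1 ≤ i) (hi₂ : i ≤ d - 1) :
    (multisetOf d ν).count i = ν i := by
  simp [multisetOf, Multiset.count_bind, Multiset.count_replicate,
    Finset.mem_Icc, hi₁, hi₂]

lemma exists_eq_cons_cons_topThree {M : Multiset ℕ} (hM : 2 ≤ Multiset.card M) :
    ∃ R : Multiset ℕ, M = (topThree M).1 ::ₘ (topThree M).2.1 ::ₘ R ∧
      (topThree M).2.1 ≤ (topThree M).1 ∧ ∀ x ∈ R, x ≤ (topThree M).2.1 := by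
  have hsorted : ((M.sort (· ≤ ·)).reverse).Pairwise (· ≥ ·) :=
    List.pairwise_reverse.2 (Multiset.pairwise_sort _ _)
  have hcoe : (((M.sort (· ≤ ·)).reverse : List ℕ) : Multiset ℕ) = M := by
    rw [Multiset.coe_reverse, Multiset.sort_eq]
  have hlen : 2 ≤ ((M.sort (· ≤ ·)).reverse).length := by
    rw [List.length_reverse, Multiset.length_sort]; exact hM
  unfold topThree
  generalize (M.sort (· ≤ ·)).reverse = l at hsorted hcoe hlen
  match l, hsorted, hcoe, hlen with
  | a :: b :: R, hsorted, hcoe, _ =>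
    subst hcoe
    simp only [List.pairwise_cons, List.mem_cons] at hsorted
    exact ⟨R, rfl, hsorted.1 b (Or.inl rfl), hsorted.2.1⟩

lemma topThree_add_le_of_hudsonIrredAux {fuel d : ℕ} {M : Multiset ℕ}
    (h : hudsonIrredAux (fuel + 1) d M) (hd : 2 < d) :
    (topThree M).1 + (topThree M).2.1 ≤ d := by
  rw [hudsonIrredAux, if_neg hd.not_ge] at h
  exact h.1

lemma sum_map_sq_add_mul_card_le {b : ℕ} {R : Multiset ℕ} (hR : ∀ x ∈ R, 1 ≤ x ∧ x ≤ b) :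
    (R.map (· ^ 2)).sum + b * Multiset.card R ≤ (b + 1) * R.sum := by
  have key : (R.map fun x => x ^ 2 + b).sum ≤ (R.map fun x => (b + 1) * x).sum :=
    Multiset.sum_map_le_sum_map _ _ fun x hx => by
      obtain ⟨h₁, h₂⟩ := hR x hx
      nlinarith [Nat.mul_le_mul (Nat.sub_le_sub_right h₂ 1) h₁]
  rw [Multiset.sum_map_add, Multiset.sum_map_mul_left, Multiset.map_const', Multiset.sum_replicate,
    Multiset.map_id', smul_eq_mul] at key
  linarith

lemma card_le_of_le_sub_two {d a b : ℕ} {R : Multiset ℕ} (hR : ∀ x ∈ R, 1 ≤ x ∧ x ≤ b)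
    (hb : 1 ≤ b) (hba : b ≤ a) (hab : a + b ≤ d) (ha : a ≤ d - 2)
    (hsum : a + b + R.sum = 3 * (d - 1))
    (hsq : a ^ 2 + b ^ 2 + (R.map (· ^ 2)).sum = d ^ 2 - 1) :
    Multiset.card R ≤ d := by
  by_contra! hcard
  have hbound := sum_map_sq_add_mul_card_le hR
  have hcard' : b * (d + 1) ≤ b * Multiset.card R := Nat.mul_le_mul_left b hcard
  generalize R.sum = S at hsum hbound
  generalize (R.map (· ^ 2)).sum = Q at hsq hbound
  have hd2 : 1 ≤ d ^ 2 := Nat.one_le_pow _ _ (by omega)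
  zify [(by omega : 1 ≤ d), hd2] at hsum hsq hbound hcard' hab hba hb
  have ha' : (a : ℤ) ≤ d - 2 := by omega
  rw [(by linarith : (S : ℤ) = 3 * (d - 1) - a - b),
    (by linarith : (Q : ℤ) = d ^ 2 - 1 - a ^ 2 - b ^ 2)] at hbound
  -- with x = d - a - b and y = a - b the gap to be shown positive is
  -- x (x - 1) + 2 (b - 1) x + y (2x + b - 2) + 2
  linarith [Int.le_self_sq (d - a - b),
    mul_nonneg (by linarith : (0 : ℤ) ≤ b - 1) (by linarith : (0 : ℤ) ≤ d - a - b),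
    mul_nonneg (by linarith : (0 : ℤ) ≤ a - b) (by linarith : (0 : ℤ) ≤ 2 * d - a - b - 2 - a)]

lemma eq_cons_replicate_one_of_fst_eq {d a b : ℕ} {R : Multiset ℕ}
    (hR : ∀ x ∈ R, 1 ≤ x ∧ x ≤ b) (hb : 1 ≤ b) (hab : a + b ≤ d) (ha : a = d - 1)
    (hsum : a + b + R.sum = 3 * (d - 1)) :
    a ::ₘ b ::ₘ R = (d - 1) ::ₘ Multiset.replicate (2 * d - 2) 1 := by
  obtain rfl : b = 1 := by omega
  have hR1 : R = Multiset.replicate (Multiset.card R) 1 :=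
    Multiset.eq_replicate.2 ⟨rfl, fun x hx => by have := hR x hx; omega⟩
  rw [hR1, Multiset.sum_replicate, smul_eq_mul, mul_one] at hsum
  rw [hR1, ha, ← Multiset.replicate_succ]
  congr 2
  omega

def IsDeJonquieres (d : ℕ) (ν : ℕ → ℕ) : Prop :=
  ν 1 = 2 * d - 2 ∧ ν (d - 1) = 1 ∧ ∀ i, 2 ≤ i → i ≤ d - 2 → ν i = 0

lemma isDeJonquieres_of_multisetOf_eq {d : ℕ} {ν : ℕ → ℕ} (hd : 3 ≤ d)
    (h : multisetOf d ν = (d - 1) ::ₘ Multiset.replicate (2 * d - 2) 1) :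
    IsDeJonquieres d ν := by
  have hν : ∀ i, 1 ≤ i → i ≤ d - 1 →
      ν i = (if i = 1 then 2 * d - 2 else 0) + (if i = d - 1 then 1 else 0) := by
    intro i hi₁ hi₂
    rw [← count_multisetOf ν hi₁ hi₂, h, Multiset.count_cons, Multiset.count_replicate]
    simp only [eq_comm]
  refine ⟨?_, ?_, fun i hi₂ hi₃ => ?_⟩
  · rw [hν 1 le_rfl (by omega)]; split_ifs <;> omega
  · rw [hν (d - 1) (by omega) le_rfl]; split_ifs <;> omega
  · rw [hν i (by omega) (by omega)]; split_ifs <;> omega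

theorem stmt_14 (d : ℕ) (hd : 4 ≤ d) (ν : ℕ → ℕ)
    (h1 : ∑ i ∈ Finset.Icc 1 (d - 1), i ^ 2 * ν i = d ^ 2 - 1)
    (h2 : ∑ i ∈ Finset.Icc 1 (d - 1), i * ν i = 3 * (d - 1))
    (hirr : HudsonIrreducible d ν)
    (hnotdJ : ¬ (ν 1 = 2 * d - 2 ∧ ν (d - 1) = 1 ∧ ∀ i, 2 ≤ i → i ≤ d - 2 → ν i = 0)) :
    ∑ i ∈ Finset.Icc 1 (d - 1), ν i ≤ d + 2 := by
  rw [← sum_map_sq_multisetOf] at h1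
  rw [← sum_multisetOf] at h2
  rw [← card_multisetOf]
  set M := multisetOf d ν
  have hmem : ∀ x ∈ M, 1 ≤ x ∧ x ≤ d - 1 := fun x hx => mem_multisetOf hx
  have hcard : 2 ≤ Multiset.card M := by
    have hsum_le := Multiset.sum_le_card_nsmul M (d - 1) fun x hx => (hmem x hx).2
    rw [h2, smul_eq_mul] at hsum_le
    by_contra! h
    have := Nat.mul_le_mul_right (d - 1) (Nat.le_of_lt_succ h)
    omega
  obtain ⟨R, hMR, hba, hRb⟩ := exists_eq_cons_cons_topThree hcard
  have hab := topThree_add_le_of_hudsonIrredAux (fuel := d - 1)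
    (by rw [Nat.sub_add_cancel (by omega)]; exact hirr) (by omega)
  set a := (topThree M).1
  set b := (topThree M).2.1
  have hb : 1 ≤ b := (hmem b (by rw [hMR]; simp)).1
  have hR : ∀ x ∈ R, 1 ≤ x ∧ x ≤ b := fun x hx => ⟨(hmem x (by rw [hMR]; simp [hx])).1, hRb x hx⟩
  rw [hMR] at h1 h2 ⊢
  simp only [Multiset.sum_cons, Multiset.map_cons, Multiset.card_cons, ← add_assoc] at h1 h2 ⊢
  rcases (show a = d - 1 ∨ a ≤ d - 2 by omega) with ha | ha
  · exact absurd (isDeJonquieres_of_multisetOf_eq (by omega)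
      (hMR.trans (eq_cons_replicate_one_of_fst_eq hR hb hab ha h2))) hnotdJ
  · have := card_le_of_le_sub_two hR hb hba hab ha h2 h1
    omega
end
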